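/- arXiv:1106.3457 — 4 statements merged into one kernel-verified Lean document; each statement's English description precedes it below -/
import Mathlib

section
/- Let A be a partially ordered set and L an algebraic lattice. For every a ∈ A and every compact element c of L, the step function a ↘ c is a compact element of the complete lattice of monotone functions from A to L ordered pointwise. -/
/-- An element `c` of a complete lattice is *compact* if whenever `c ≤ sSup S`
there is a finite subset `S' ⊆ S` with `c ≤ sSup S'`. -/
def IsCpt {L : Type*} [CompleteLattice L] (c : L) : Prop :=
  ∀ S : Set L, c ≤ sSup S → ∃ S' ⊆ S, S'.Finite ∧ c ≤ sSup S'

/-- A complete lattice is *algebraic* if every element is the least upper bound of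
some set of compact elements. -/
def IsAlgebraicLattice (L : Type*) [CompleteLattice L] : Prop :=
  ∀ x : L, ∃ B : Set L, (∀ b ∈ B, IsCpt b) ∧ x = sSup B

open Classical in
/-- The step function `a ↘ c : A → L`, sending `x` to `c` if `a ≤ x` and to `⊥` otherwise.
It is monotone, hence an element of the complete lattice `A →o L`. -/
noncomputable def step {A L : Type*} [PartialOrder A] [CompleteLattice L] (a : A) (c : L) :
    A →o L :=
  ⟨fun x => if a ≤ x then c else ⊥, by
    intro x y hxy
    dsimp only
    split_ifs with h1 h2
    · exact le_refl c
    · exact absurd (h1.trans hxy) h2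
    · exact bot_le
    · exact le_rfl⟩


/-- For a poset `A` and an algebraic lattice `L`, every step function `a ↘ c`
with `c` compact in `L` is a compact element of the complete lattice `A →o L` of monotone
functions ordered pointwise. -/
theorem step_isCompact {A L : Type*} [PartialOrder A] [CompleteLattice L]
    (halg : IsAlgebraicLattice L) (a : A) (c : L) (hc : IsCpt c) :
    IsCpt (step a c : A →o L) := by
  intro S hS
  have ha : c ≤ sSup ((fun f : A →o L => f a) '' S) := by
    have h0 : (step a c) a = c := if_pos le_rfl
    rw [sSup_image]
    have h1 := hS a
    simp only [OrderHom.sSup_apply, step, OrderHom.coe_mk, if_pos le_rfl] at h1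
    exact h1
  obtain ⟨T, hTsub, hTfin, hTle⟩ := hc _ ha
  -- choose for each t ∈ T a preimage in S
  choose g hgS hga using fun t (ht : t ∈ T) => hTsub ht
  refine ⟨(fun t : T => g t t.2) '' Set.univ, ?_, ?_, ?_⟩
  · rintro _ ⟨t, -, rfl⟩; exact hgS t t.2
  · exact (Set.finite_univ_iff.2 (hTfin.to_subtype)).image _
  · intro x
    simp only [step, OrderHom.coe_mk]
    split_ifs with hax
    · refine hTle.trans (sSup_le fun t ht => ?_)
      have h1 : t ≤ g t ht a := (hga t ht).ge
      have h2 : g t ht a ≤ g t ht x := (g t ht).mono hax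
      refine (h1.trans h2).trans ?_
      refine le_trans ?_ (le_refl _)
      have : g t ht ∈ (fun t : T => g t t.2) '' Set.univ := ⟨⟨t, ht⟩, trivial, rfl⟩
      calc g t ht x ≤ ⨆ f ∈ (fun t : T => g t t.2) '' Set.univ, (f : A →o L) x :=
        le_iSup₂ (f := fun f (_ : f ∈ _) => (f : A →o L) x) _ this
        _ = _ := (OrderHom.sSup_apply _ x).symm
    · exact bot_le
end

section
/- Let A be a partially ordered set and L an algebraic lattice. Then every monotone function f : A → L is the least upper bound, in the pointwise order on monotone functions from A to L, of the set of all step functions a ↘ c (with a ∈ A and c a compact element of L) that lie below f. -/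
section Step

variable {A L : Type*} [PartialOrder A] [CompleteLattice L]

theorem step_apply_of_le {a x : A} (c : L) (h : a ≤ x) : step a c x = c :=
  if_pos h

theorem step_apply_of_not_le {a x : A} (c : L) (h : ¬a ≤ x) : step a c x = ⊥ :=
  if_neg h

theorem step_le_iff {a : A} {c : L} {f : A →o L} : step a c ≤ f ↔ c ≤ f a := by
  refine ⟨fun h => step_apply_of_le c (le_refl a) ▸ h a, fun h x => ?_⟩
  by_cases hax : a ≤ x
  · rw [step_apply_of_le c hax]
    exact h.trans (f.monotone hax)
  · rw [step_apply_of_not_le c hax]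
    exact bot_le

end Step

theorem IsAlgebraicLattice.le_of_forall_isCpt_le {L : Type*} [CompleteLattice L]
    (halg : IsAlgebraicLattice L) {y z : L} (h : ∀ c, IsCpt c → c ≤ y → c ≤ z) :
    y ≤ z := by
  obtain ⟨B, hB, rfl⟩ := halg y
  exact sSup_le fun c hc => h c (hB c hc) (le_sSup hc)

/-- For a poset `A` and an algebraic lattice `L`, every monotone `f : A → L` is
the least upper bound, in the pointwise order, of the set of step functions `a ↘ c`
(with `c` compact) lying below `f`. -/
theorem isLUB_steps_below {A L : Type*} [PartialOrder A] [CompleteLattice L]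
    (halg : IsAlgebraicLattice L) (f : A →o L) :
    IsLUB {g : A →o L | (∃ (a : A) (c : L), IsCpt c ∧ g = step a c) ∧ g ≤ f} f := by
  refine ⟨fun g hg => hg.2, fun g hg x => halg.le_of_forall_isCpt_le fun c hc hcf => ?_⟩
  have hstep_le := hg ⟨⟨x, c, hc, rfl⟩, step_le_iff.2 hcf⟩ x
  rwa [step_apply_of_le c (le_refl x)] at hstep_le
end

section
/- Let A be a partially ordered set and L an algebraic lattice. Then the complete lattice of monotone functions from A to L, ordered pointwise, is an algebraic lattice, and its compact elements are exactly the least upper bounds of finitely many step functions: a monotone g : A → L is compact if and only if g = sSup S for some finite set S of step functions a ↘ c with a ∈ A and c a compact element of L. -/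
/-! A step `a ↘ c` lies below a monotone `f` iff `c ≤ f a`, so compactness of `a ↘ c` is tested
at the single coordinate `a` and is inherited from that of `c`; and, `L` being algebraic, every
monotone `f` is the join of the compact steps below it. A compact `g` is therefore the join of
finitely many of these steps, and conversely finite joins of compact elements are compact. -/

section CompactElements

variable {L : Type*} [CompleteLattice L]

theorem isCpt_iff_isCompactElement {c : L} : IsCpt c ↔ IsCompactElement c := by
  rw [CompleteLattice.isCompactElement_iff_exists_le_sSup_of_le_sSup]
  refine forall_congr' fun S => imp_congr_right fun _ => ⟨?_, ?_⟩
  · rintro ⟨S', hS'S, hS'fin, hcS'⟩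
    lift S' to Finset L using hS'fin
    exact ⟨S', hS'S, by rwa [Finset.sup_id_eq_sSup]⟩
  · rintro ⟨t, htS, hct⟩
    exact ⟨t, htS, t.finite_toSet, by rwa [← Finset.sup_id_eq_sSup]⟩

theorem isCpt_sSup_of_finite {S : Set L} (hS : S.Finite) (hcpt : ∀ c ∈ S, IsCpt c) :
    IsCpt (sSup S) := by
  lift S to Finset L using hS
  rw [isCpt_iff_isCompactElement, ← Finset.sup_id_eq_sSup]
  exact CompleteLattice.isCompactElement_finsetSup S fun c hc =>
    isCpt_iff_isCompactElement.mp (hcpt c hc)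

theorem IsCpt.exists_finite_subset_eq_sSup {g : L} (hg : IsCpt g) {D : Set L}
    (hgD : g = sSup D) : ∃ S ⊆ D, S.Finite ∧ g = sSup S := by
  obtain ⟨S, hSD, hSfin, hgS⟩ := hg D hgD.le
  exact ⟨S, hSD, hSfin, hgS.antisymm (hgD ▸ sSup_le_sSup hSD)⟩

end CompactElements

section StepFunctions

variable {A L : Type*} [PartialOrder A] [CompleteLattice L]

theorem step_apply_self (a : A) (c : L) : step a c a = c :=
  if_pos le_rfl

theorem isCpt_step {a : A} {c : L} (hc : IsCpt c) : IsCpt (step a c) := by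
  intro S hcS
  have hca : c ≤ sSup ((fun f : A →o L => f a) '' S) := by
    rw [sSup_image, ← OrderHom.sSup_apply]
    exact step_le_iff.mp hcS
  obtain ⟨S', hS'S, hS'fin, hcS'⟩ := Set.exists_subset_image_finite_and.mp (hc _ hca)
  refine ⟨S', hS'S, hS'fin, step_le_iff.mpr ?_⟩
  rwa [OrderHom.sSup_apply, ← sSup_image]

theorem eq_sSup_compact_steps_le (halg : IsAlgebraicLattice L) (f : A →o L) :
    f = sSup {h | (∃ (a : A) (c : L), IsCpt c ∧ h = step a c) ∧ h ≤ f} := by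
  refine le_antisymm (fun x => ?_) (sSup_le fun h hh => hh.2)
  obtain ⟨B, hBcpt, hxB⟩ := halg (f x)
  show f x ≤ _
  rw [hxB]
  refine sSup_le fun b hb => ?_
  have hstep : step x b ≤ f := step_le_iff.mpr (hxB ▸ le_sSup hb)
  calc b = step x b x := (step_apply_self x b).symm
    _ ≤ _ := le_sSup (s := {h | _ ∧ h ≤ f}) ⟨⟨x, b, hBcpt b hb, rfl⟩, hstep⟩ x

end StepFunctions

/-- For a poset `A` and an algebraic lattice `L`, the complete lattice `A →o L`
of monotone functions ordered pointwise is algebraic, and its compact elements are exactly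
the least upper bounds of finitely many step functions `a ↘ c` with `c` compact in `L`. -/
theorem monotone_lattice_algebraic {A L : Type*} [PartialOrder A] [CompleteLattice L]
    (halg : IsAlgebraicLattice L) :
    IsAlgebraicLattice (A →o L) ∧
      ∀ g : A →o L, IsCpt g ↔
        ∃ S : Set (A →o L), S.Finite ∧
          (∀ h ∈ S, ∃ (a : A) (c : L), IsCpt c ∧ h = step a c) ∧ g = sSup S := by
  have isCpt_of_step : ∀ h : A →o L, (∃ (a : A) (c : L), IsCpt c ∧ h = step a c) → IsCpt h := by
    rintro _ ⟨a, c, hc, rfl⟩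
    exact isCpt_step hc
  refine ⟨fun f => ⟨_, fun h hh => isCpt_of_step h hh.1, eq_sSup_compact_steps_le halg f⟩,
    fun g => ⟨fun hg => ?_, ?_⟩⟩
  · obtain ⟨S, hS, hSfin, hgS⟩ :=
      hg.exists_finite_subset_eq_sSup (eq_sSup_compact_steps_le halg g)
    exact ⟨S, hSfin, fun h hh => (hS hh).1, hgS⟩
  · rintro ⟨S, hSfin, hSsteps, rfl⟩
    exact isCpt_sSup_of_finite hSfin fun h hh => isCpt_of_step h (hSsteps h hh)
end

section
/- Let A be a countable partially ordered set and L an algebraic lattice whose set of compact elements is countable (an ω-algebraic lattice). Then the set of compact elements of the complete lattice of monotone functions from A to L, ordered pointwise, is countable; that is, this function lattice is again ω-algebraic. -/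
/-! Every monotone `g : A →o L` is the join of the steps `step a c ≤ g` with `c` compact, since
`L` is algebraic pointwise. A compact `g` is then the join of finitely many of these steps, and
as `A` and the compact elements of `L` are countable, there are only countably many finite sets
of such steps. -/

section CompactElements

variable {L : Type*} [CompleteLattice L]

theorem IsCpt.exists_finite_eq_sSup {g : L} (hg : IsCpt g) {S : Set L} (hgS : g ≤ sSup S)
    (hSg : ∀ s ∈ S, s ≤ g) : ∃ S' ⊆ S, S'.Finite ∧ g = sSup S' := by
  obtain ⟨S', hS'S, hfin, hgS'⟩ := hg S hgS
  exact ⟨S', hS'S, hfin, le_antisymm hgS' (sSup_le fun s hs => hSg s (hS'S hs))⟩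

theorem countable_setOf_isCpt_of_le_sSup {T : Set L} (hT : T.Countable)
    (hgen : ∀ g : L, IsCpt g → g ≤ sSup (T ∩ Set.Iic g)) : {g : L | IsCpt g}.Countable := by
  refine ((Set.countable_ofPred_finite_subset hT).image sSup).mono fun g hg => ?_
  obtain ⟨S', hS'T, hfin, rfl⟩ := hg.exists_finite_eq_sSup (hgen g hg) fun _ ht => ht.2
  exact ⟨S', ⟨hfin, fun t ht => (hS'T ht).1⟩, rfl⟩

end CompactElements

section Step

variable {A L : Type*} [PartialOrder A] [CompleteLattice L]

variable (A L) in
noncomputable def compactSteps : Set (A →o L) :=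
  (fun p : A × L => step p.1 p.2) '' (Set.univ ×ˢ {c | IsCpt c})

theorem countable_compactSteps [Countable A] (hcnt : {c : L | IsCpt c}.Countable) :
    (compactSteps A L).Countable :=
  (Set.countable_univ.prod hcnt).image _

theorem le_sSup_compactSteps_inter_Iic (halg : IsAlgebraicLattice L) (g : A →o L) :
    g ≤ sSup (compactSteps A L ∩ Set.Iic g) := by
  intro x
  obtain ⟨B, hB, hgx⟩ := halg (g x)
  rw [OrderHom.sSup_apply, hgx]
  refine sSup_le fun c hc => ?_
  have hstep_mem : step x c ∈ compactSteps A L ∩ Set.Iic g :=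
    ⟨⟨(x, c), ⟨trivial, hB c hc⟩, rfl⟩, step_le_iff.2 (hgx ▸ le_sSup hc)⟩
  calc c = step x c x := (step_apply_of_le c le_rfl).symm
    _ ≤ _ := le_biSup (fun f : A →o L => f x) hstep_mem

end Step

/-- For a countable poset `A` and an ω-algebraic lattice `L` (algebraic with
countably many compact elements), the set of compact elements of the complete lattice
`A →o L` of monotone functions ordered pointwise is countable. -/
theorem monotone_lattice_omega_algebraic {A L : Type*} [PartialOrder A] [CompleteLattice L]
    [Countable A] (halg : IsAlgebraicLattice L)
    (hcnt : {c : L | IsCpt c}.Countable) :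
    {g : A →o L | IsCpt g}.Countable :=
  countable_setOf_isCpt_of_le_sSup (countable_compactSteps hcnt)
    fun g _ => le_sSup_compactSteps_inter_Iic halg g
end
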